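/- Under the hypotheses of the ellipticity lemma, suppose additionally $G_2(y,p,Q) > 0$ and there exists $\Theta > 0$ with $Q - D^2_{yy}s(x,y) \le \Theta I$ for all $x \in X_2(y,p,Q)$. Then for all symmetric $Q' \ge Q$: $G_2(y,p,Q') - G_2(y,p,Q) \ge \frac{G_2(y,p,Q)}{\Theta} \operatorname{tr}[Q' - Q]$. -/

import Mathlib

/-!
Fix `x ∈ X₂(Q)` and put `M = Q - D²_yy s(x,y) ≥ 0`, `P = Q' - Q ≥ 0`. If `M` is invertible,
then with `B = √M` and `N = B⁻¹ P B⁻¹ ≥ 0` we have `M + P = B (1 + N) B`, so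
`det (M + P) = det M · det (1 + N) ≥ det M · (1 + tr N)` (expand `∏ (1 + λᵢ)` over the eigenvalues
of `N`), and `tr P = tr (N M) ≤ Θ tr N` because `M ≤ Θ I`; if `M` is singular, `det M = 0` and
the same bound is trivial. Hence the integrand of `G₂(Q')` dominates
`(1 + tr (Q' - Q) / Θ)` times that of `G₂(Q)` on `X₂(Q)`; since `X₂(Q) ⊆ X₂(Q')` and the integrand
of `G₂(Q')` is nonnegative there, integrating gives the claim.
-/

open MeasureTheory Set Matrix
open scoped MatrixOrder ComplexOrder

theorem Finset.one_add_sum_le_prod_one_add {ι R : Type*} [CommRing R] [LinearOrder R]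
    [IsStrictOrderedRing R] (s : Finset ι) {f : ι → R} (hf : ∀ i ∈ s, 0 ≤ f i) :
    1 + ∑ i ∈ s, f i ≤ ∏ i ∈ s, (1 + f i) := by
  induction s using Finset.cons_induction with
  | empty => simp
  | cons a s _ ih =>
    rw [Finset.sum_cons, Finset.prod_cons]
    have hfa := hf a (Finset.mem_cons_self a s)
    have hfs : ∀ i ∈ s, 0 ≤ f i := fun i hi => hf i (Finset.mem_cons_of_mem hi)
    nlinarith [ih hfs, Finset.sum_nonneg hfs]

namespace Matrix

variable {ι 𝕜 : Type*} [Fintype ι] [DecidableEq ι] [RCLike 𝕜]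

theorem PosSemidef.trace_mul_nonneg {A B : Matrix ι ι 𝕜} (hA : A.PosSemidef) (hB : B.PosSemidef) :
    0 ≤ (A * B).trace := by
  have hsqrt : CFC.sqrt B * CFC.sqrt B = B := CFC.sqrt_mul_sqrt_self B hB.nonneg
  have hherm : (CFC.sqrt B)ᴴ = CFC.sqrt B := (CFC.sqrt_nonneg B).posSemidef.1
  rw [← hsqrt, ← Matrix.mul_assoc, trace_mul_comm, ← Matrix.mul_assoc]
  simpa only [hherm] using (hA.mul_mul_conjTranspose_same (CFC.sqrt B)).trace_nonneg

theorem IsHermitian.det_cfc {A : Matrix ι ι 𝕜} (hA : A.IsHermitian) (f : ℝ → ℝ) :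
    (cfc f A).det = ∏ i, (f (hA.eigenvalues i) : 𝕜) := by
  rw [hA.cfc_eq]
  simp [IsHermitian.cfc, -Unitary.conjStarAlgAut_apply]

theorem PosSemidef.one_add_trace_le_det_one_add {N : Matrix ι ι ℝ} (hN : N.PosSemidef) :
    1 + N.trace ≤ (1 + N).det := by
  have hcfc : cfc (fun t : ℝ => 1 + t) N = 1 + N := by
    rw [cfc_const_add (1 : ℝ) (fun t => t) N, cfc_id' ℝ N, algebraMap_eq_diagonal]
    simp
  rw [← hcfc, hN.1.det_cfc, hN.1.trace_eq_sum_eigenvalues]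
  exact Finset.one_add_sum_le_prod_one_add _ fun i _ => by simpa using hN.eigenvalues_nonneg i

theorem PosSemidef.det_mul_one_add_trace_div_le_det_add {M P : Matrix ι ι ℝ} {Θ : ℝ}
    (hM : M.PosSemidef) (hP : P.PosSemidef) (hΘ : 0 < Θ) (hMΘ : (Θ • 1 - M).PosSemidef) :
    M.det * (1 + P.trace / Θ) ≤ (M + P).det := by
  rcases hM.det_nonneg.eq_or_lt with hdet | hdet
  · rw [← hdet, zero_mul]
    exact (hM.add hP).det_nonneg
  set B := CFC.sqrt M
  have hBB : B * B = M := CFC.sqrt_mul_sqrt_self M hM.nonneg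
  have hB : Bᴴ = B := (CFC.sqrt_nonneg M).posSemidef.1
  have hBunit : IsUnit B.det := by
    refine isUnit_iff_ne_zero.mpr fun h0 => hdet.ne' ?_
    rw [← hBB, det_mul, h0, mul_zero]
  set N := B⁻¹ * P * B⁻¹
  have hN : N.PosSemidef := by
    simpa only [conjTranspose_nonsing_inv, hB] using hP.mul_mul_conjTranspose_same B⁻¹
  have hP_eq : P = B * N * B := by
    simp only [N, Matrix.mul_assoc, nonsing_inv_mul _ hBunit, Matrix.mul_one,
      mul_nonsing_inv_cancel_left _ _ hBunit]
  have hdet_add : (M + P).det = M.det * (1 + N).det := by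
    have hMP : M + P = B * (1 + N) * B := by
      rw [Matrix.mul_add, Matrix.add_mul, Matrix.mul_one, hBB, ← hP_eq]
    rw [hMP, det_mul, det_mul, ← hBB, det_mul]
    ring
  have htrace : P.trace ≤ Θ * N.trace := calc
    P.trace = (N * M).trace := by rw [hP_eq, trace_mul_cycle, trace_mul_comm, hBB]
    _ ≤ Θ * N.trace := by
      simpa [Matrix.mul_sub, trace_sub] using hN.trace_mul_nonneg hMΘ
  have hdiv : P.trace / Θ ≤ N.trace := by rwa [div_le_iff₀' hΘ]
  rw [hdet_add]
  gcongr
  linarith [hN.one_add_trace_le_det_one_add]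

end Matrix

namespace MeasureTheory

variable {α : Type*} [MeasurableSpace α] {μ : Measure α} {s t : Set α}

/- The sets below are not assumed measurable, and `μ.restrict s` need not be carried by a
non-measurable `s`: the null-measurability of `{x | p x}` is what lets `h` be used. -/
theorem ae_restrict_of_forall_mem_of_nullMeasurableSet {p : α → Prop}
    (hp : NullMeasurableSet {x | p x} (μ.restrict s)) (h : ∀ x ∈ s, p x) :
    ∀ᵐ x ∂μ.restrict s, p x := by
  have hp' : NullMeasurableSet {x | ¬p x} (μ.restrict s) := hp.compl
  rw [ae_iff, Measure.restrict_apply₀ hp', ← measure_empty (μ := μ)]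
  exact congrArg μ (eq_empty_of_forall_notMem fun x hx => hx.1 (h x hx.2))

theorem setIntegral_mono_on' {f g : α → ℝ} (hf : IntegrableOn f s μ) (hg : IntegrableOn g s μ)
    (h : ∀ x ∈ s, f x ≤ g x) : ∫ x in s, f x ∂μ ≤ ∫ x in s, g x ∂μ :=
  integral_mono_ae hf hg <| ae_restrict_of_forall_mem_of_nullMeasurableSet
    (nullMeasurableSet_le hf.aemeasurable hg.aemeasurable) h

theorem setIntegral_mono_set_of_forall_mem {f : α → ℝ} (hst : s ⊆ t) (hf : IntegrableOn f t μ)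
    (hf_nonneg : ∀ x ∈ t, 0 ≤ f x) : ∫ x in s, f x ∂μ ≤ ∫ x in t, f x ∂μ :=
  setIntegral_mono_set hf (ae_restrict_of_forall_mem_of_nullMeasurableSet
    (nullMeasurableSet_le aemeasurable_const hf.aemeasurable) hf_nonneg) hst.eventuallyLE

theorem mul_setIntegral_le_setIntegral_sub_setIntegral {f g : α → ℝ} {c : ℝ} (hst : s ⊆ t)
    (hf : IntegrableOn f s μ) (hg : IntegrableOn g t μ) (hg_nonneg : ∀ x ∈ t, 0 ≤ g x)
    (hfg : ∀ x ∈ s, (1 + c) * f x ≤ g x) :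
    c * ∫ x in s, f x ∂μ ≤ ∫ x in t, g x ∂μ - ∫ x in s, f x ∂μ := by
  have h := (setIntegral_mono_on' (hf.const_mul (1 + c)) (hg.mono_set hst) hfg).trans
    (setIntegral_mono_set_of_forall_mem hst hg hg_nonneg)
  rw [integral_const_mul] at h
  linarith

end MeasureTheory

theorem stmt6_general {m n : ℕ}
    (X : Set (EuclideanSpace ℝ (Fin m)))
    (Dys : EuclideanSpace ℝ (Fin m) → EuclideanSpace ℝ (Fin n))
    (S : EuclideanSpace ℝ (Fin m) → Matrix (Fin n) (Fin n) ℝ)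
    (w : EuclideanSpace ℝ (Fin m) → ℝ) (hw : ∀ x, 0 ≤ w x)
    (p : EuclideanSpace ℝ (Fin n))
    (Q Q' : Matrix (Fin n) (Fin n) ℝ)
    (hQQ' : (Q' - Q).PosSemidef)
    (Θ : ℝ) (hΘ : 0 < Θ)
    (hbd : ∀ x ∈ {x ∈ X | Dys x = p ∧ (Q - S x).PosSemidef},
      (Θ • (1 : Matrix (Fin n) (Fin n) ℝ) - (Q - S x)).PosSemidef)
    (hintQ : IntegrableOn (fun x => (Q - S x).det * w x)
      {x ∈ X | Dys x = p ∧ (Q - S x).PosSemidef}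
      (μH[(m - n : ℝ)] : Measure (EuclideanSpace ℝ (Fin m))))
    (hintQ' : IntegrableOn (fun x => (Q' - S x).det * w x)
      {x ∈ X | Dys x = p ∧ (Q' - S x).PosSemidef}
      (μH[(m - n : ℝ)] : Measure (EuclideanSpace ℝ (Fin m)))) :
    (∫ x in {x ∈ X | Dys x = p ∧ (Q - S x).PosSemidef},
        (Q - S x).det * w x
        ∂(μH[(m - n : ℝ)] : Measure (EuclideanSpace ℝ (Fin m)))) / Θ * (Q' - Q).trace ≤
    (∫ x in {x ∈ X | Dys x = p ∧ (Q' - S x).PosSemidef},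
        (Q' - S x).det * w x
        ∂(μH[(m - n : ℝ)] : Measure (EuclideanSpace ℝ (Fin m)))) -
    ∫ x in {x ∈ X | Dys x = p ∧ (Q - S x).PosSemidef},
        (Q - S x).det * w x
        ∂(μH[(m - n : ℝ)] : Measure (EuclideanSpace ℝ (Fin m))) := by
  have hsub : {x ∈ X | Dys x = p ∧ (Q - S x).PosSemidef} ⊆
      {x ∈ X | Dys x = p ∧ (Q' - S x).PosSemidef} := fun x ⟨hX, hp, hQx⟩ =>
    ⟨hX, hp, sub_add_sub_cancel' Q (S x) Q' ▸ hQx.add hQQ'⟩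
  have hdet : ∀ x ∈ {x ∈ X | Dys x = p ∧ (Q - S x).PosSemidef},
      (1 + (Q' - Q).trace / Θ) * ((Q - S x).det * w x) ≤ (Q' - S x).det * w x := by
    intro x hx
    have h := hx.2.2.det_mul_one_add_trace_div_le_det_add hQQ' hΘ (hbd x hx)
    rw [sub_add_sub_cancel'] at h
    nlinarith [hw x]
  have h := mul_setIntegral_le_setIntegral_sub_setIntegral hsub hintQ hintQ'
    (fun x hx => mul_nonneg hx.2.2.det_nonneg (hw x)) hdet
  rwa [div_mul_comm]

/-- Strict ellipticity of `G₂` with ellipticity constant `λ = G₂(y,p,Q)/Θ`: if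
`G₂(y,p,Q) > 0` and `Q - D²_yy s(x,y) ≤ Θ I` on `X₂(y,p,Q)`, then for all symmetric
`Q' ≥ Q`, `G₂(y,p,Q') - G₂(y,p,Q) ≥ (G₂(y,p,Q)/Θ) tr(Q' - Q)`. -/
theorem stmt6 {m n : ℕ}
    (X : Set (EuclideanSpace ℝ (Fin m)))
    (Dys : EuclideanSpace ℝ (Fin m) → EuclideanSpace ℝ (Fin n))
    (S : EuclideanSpace ℝ (Fin m) → Matrix (Fin n) (Fin n) ℝ)
    (w : EuclideanSpace ℝ (Fin m) → ℝ) (hw : ∀ x, 0 ≤ w x)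
    (p : EuclideanSpace ℝ (Fin n))
    (Q Q' : Matrix (Fin n) (Fin n) ℝ)
    (hQ : Q.IsSymm) (hQ' : Q'.IsSymm)
    (hQQ' : (Q' - Q).PosSemidef)
    (Θ : ℝ) (hΘ : 0 < Θ)
    (hbd : ∀ x ∈ {x ∈ X | Dys x = p ∧ (Q - S x).PosSemidef},
      (Θ • (1 : Matrix (Fin n) (Fin n) ℝ) - (Q - S x)).PosSemidef)
    (hintQ : IntegrableOn (fun x => (Q - S x).det * w x)
      {x ∈ X | Dys x = p ∧ (Q - S x).PosSemidef}
      (μH[(m - n : ℝ)] : Measure (EuclideanSpace ℝ (Fin m))))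
    (hintQ' : IntegrableOn (fun x => (Q' - S x).det * w x)
      {x ∈ X | Dys x = p ∧ (Q' - S x).PosSemidef}
      (μH[(m - n : ℝ)] : Measure (EuclideanSpace ℝ (Fin m))))
    (hpos : 0 < ∫ x in {x ∈ X | Dys x = p ∧ (Q - S x).PosSemidef},
      (Q - S x).det * w x ∂(μH[(m - n : ℝ)] : Measure (EuclideanSpace ℝ (Fin m)))) :
    (∫ x in {x ∈ X | Dys x = p ∧ (Q - S x).PosSemidef},
        (Q - S x).det * w x
        ∂(μH[(m - n : ℝ)] : Measure (EuclideanSpace ℝ (Fin m)))) / Θ * (Q' - Q).trace ≤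
    (∫ x in {x ∈ X | Dys x = p ∧ (Q' - S x).PosSemidef},
        (Q' - S x).det * w x
        ∂(μH[(m - n : ℝ)] : Measure (EuclideanSpace ℝ (Fin m)))) -
    ∫ x in {x ∈ X | Dys x = p ∧ (Q - S x).PosSemidef},
        (Q - S x).det * w x
        ∂(μH[(m - n : ℝ)] : Measure (EuclideanSpace ℝ (Fin m))) :=
  stmt6_general X Dys S w hw p Q Q' hQQ' Θ hΘ hbd hintQ hintQ'
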